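/- Let φ : ℝ → ℝ be defined by φ(t) := sin(t)/(π t) for t ≠ 0 and φ(0) := 1/π. Then for every integer l ≥ 2, the iterated integral ∫_ℝ ⋯ ∫_ℝ φ(−t_2) φ(t_2 − t_3) ⋯ φ(t_{l−1} − t_l) φ(t_l) dt_2 ⋯ dt_l equals 1/π. (In particular, for l = 2, ∫_ℝ (sin t / (π t))² dt = 1/π.) -/

import Mathlib

open MeasureTheory Filter Set

/-- `φ(t) = sin t / (π t)`, with `φ(0) = 1/π`. -/
noncomputable def sincpi (t : ℝ) : ℝ :=
  if t = 0 then 1 / Real.pi else Real.sin t / (Real.pi * t)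

/-- `convIter n` is the `n`-fold successive convolution of `φ` with itself (`n+1` factors):
`convIter (n+1) x = ∫ φ(x - t) convIter n (t) dt`. -/
noncomputable def convIter : ℕ → ℝ → ℝ
  | 0 => sincpi
  | (n+1) => fun x => ∫ t : ℝ, sincpi (x - t) * convIter n t

/-! The function `sincpi` is the Fourier transform of the indicator of `[-(2π)⁻¹, (2π)⁻¹]`, and
`t ↦ sincpi (x - t)` that of the same window modulated by `u ↦ exp (2πixu)`. The convolution of
these two windows is continuous and has the integrable Fourier transform
`t ↦ sincpi (x - t) * sincpi t` (a product of two `L²` functions), so Fourier inversion at `0`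
gives `∫ sincpi (x - t) * sincpi t dt = sincpi x`: `sincpi` is a fixed point of convolution with
itself, hence every `convIter n` is `sincpi`. -/

open scoped Real FourierTransform Convolution
open Complex (I)

lemma sincpi_eq_sinc_div_pi (t : ℝ) : sincpi t = Real.sinc t / π := by
  rcases eq_or_ne t 0 with rfl | ht
  · simp [sincpi]
  · rw [sincpi, if_neg ht, Real.sinc_of_ne_zero ht, div_div, mul_comm]

lemma sincpi_neg (t : ℝ) : sincpi (-t) = sincpi t := by
  simp only [sincpi_eq_sinc_div_pi, Real.sinc_neg]

lemma sinc_mul_eq_sin (t : ℝ) : Real.sinc t * t = Real.sin t := by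
  rcases eq_or_ne t 0 with rfl | ht
  · simp
  · rw [Real.sinc_of_ne_zero ht, div_mul_cancel₀ _ ht]

lemma sinc_sq_mul_one_add_sq_le_two (t : ℝ) : Real.sinc t ^ 2 * (1 + t ^ 2) ≤ 2 := by
  have hsinc : Real.sinc t ^ 2 ≤ 1 := by
    rw [sq_le_one_iff_abs_le_one]; exact Real.abs_sinc_le_one t
  calc Real.sinc t ^ 2 * (1 + t ^ 2) = Real.sinc t ^ 2 + Real.sin t ^ 2 := by
        rw [← sinc_mul_eq_sin]; ring
    _ ≤ 2 := by linarith [Real.sin_sq_le_one t]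

lemma memLp_sinc_two : MemLp Real.sinc 2 := by
  have hmeas := Real.continuous_sinc.aestronglyMeasurable (μ := volume)
  refine (memLp_two_iff_integrable_sq hmeas).2 ?_
  refine (integrable_inv_one_add_sq.const_mul 2).mono' (hmeas.pow 2) (ae_of_all _ fun t => ?_)
  rw [Real.norm_eq_abs, abs_of_nonneg (sq_nonneg _), ← div_eq_mul_inv,
    le_div_iff₀ (by positivity)]
  exact sinc_sq_mul_one_add_sq_le_two t

lemma memLp_sincpi_two : MemLp sincpi 2 := by
  have : sincpi = fun t => π⁻¹ * Real.sinc t := by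
    ext t; rw [sincpi_eq_sinc_div_pi, div_eq_inv_mul]
  rw [this]
  exact memLp_sinc_two.const_mul _

lemma integrable_sincpi_sub_mul_sincpi (x : ℝ) :
    Integrable fun t => sincpi (x - t) * sincpi t :=
  (memLp_sincpi_two.comp_measurePreserving
    (Measure.measurePreserving_sub_left volume x)).integrable_mul memLp_sincpi_two

lemma integral_exp_mul_mul_I_eq_sinc (r s : ℝ) :
    ∫ u in -r..r, Complex.exp (s * u * I) = 2 * r * Real.sinc (s * r) := by
  rcases eq_or_ne s 0 with rfl | hs
  · simp [two_mul]
  · have h := intervalIntegral.integral_comp_mul_left (fun t : ℝ => Complex.exp (t * I)) hs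
      (a := -r) (b := r)
    rw [mul_neg, integral_exp_mul_I_eq_sinc] at h
    push_cast at h
    have hs' : (s : ℂ) ≠ 0 := Complex.ofReal_ne_zero.2 hs
    rw [h, Complex.real_smul]
    push_cast
    field_simp

noncomputable def modulatedWindow (x : ℝ) : ℝ → ℂ :=
  (Icc (-(2 * π)⁻¹) (2 * π)⁻¹).indicator fun u => Complex.exp (2 * π * x * u * I)

lemma integrable_modulatedWindow (x : ℝ) : Integrable (modulatedWindow x) :=
  (continuous_const.mul Complex.continuous_ofReal |>.mul continuous_const |>.cexp
    |>.integrableOn_Icc).integrable_indicator measurableSet_Icc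

lemma modulatedWindow_zero : modulatedWindow 0 = (Icc (-(2 * π)⁻¹) (2 * π)⁻¹).indicator 1 := by
  simp [modulatedWindow, Pi.one_def]

lemma integral_exp_window_eq_sincpi (s : ℝ) :
    ∫ u in -(2 * π)⁻¹..(2 * π)⁻¹, Complex.exp (2 * π * s * u * I) = sincpi s := by
  have h := integral_exp_mul_mul_I_eq_sinc (2 * π)⁻¹ (2 * π * s)
  rw [show 2 * π * s * (2 * π)⁻¹ = s by field_simp] at h
  push_cast at h
  rw [h, sincpi_eq_sinc_div_pi]
  push_cast
  field_simp

lemma fourier_modulatedWindow (x t : ℝ) : 𝓕 (modulatedWindow x) t = sincpi (x - t) := by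
  have hpt : ∀ v : ℝ, Complex.exp (↑(-2 * π * v * t) * I) • modulatedWindow x v =
      (Icc (-(2 * π)⁻¹) (2 * π)⁻¹).indicator
        (fun u => Complex.exp (2 * π * ↑(x - t) * u * I)) v := by
    intro v
    by_cases hv : v ∈ Icc (-(2 * π)⁻¹) (2 * π)⁻¹
    · simp only [modulatedWindow, indicator_of_mem hv, smul_eq_mul, ← Complex.exp_add]
      push_cast; ring_nf
    · simp only [modulatedWindow, indicator_of_notMem hv, smul_zero]
  rw [Real.fourier_real_eq_integral_exp_smul, integral_congr_ae (ae_of_all _ hpt),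
    integral_indicator measurableSet_Icc, integral_Icc_eq_integral_Ioc,
    ← intervalIntegral.integral_of_le (by linarith [inv_pos.2 Real.two_pi_pos]),
    integral_exp_window_eq_sincpi]

lemma convolution_indicator_Icc (f : ℝ → ℂ) {a b : ℝ} (hab : a ≤ b) (y : ℝ) :
    (f ⋆[ContinuousLinearMap.mul ℂ ℂ] (Icc a b).indicator 1) y =
      ∫ u in (y - b)..(y - a), f u := by
  have hpt : ∀ u, f u * (Icc a b).indicator 1 (y - u) = (Icc (y - b) (y - a)).indicator f u := by
    intro u
    by_cases hu : u ∈ Icc (y - b) (y - a)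
    · have : y - u ∈ Icc a b := by constructor <;> linarith [hu.1, hu.2]
      simp [indicator_of_mem hu, indicator_of_mem this]
    · have : y - u ∉ Icc a b := fun h => hu ⟨by linarith [h.2], by linarith [h.1]⟩
      simp [indicator_of_notMem hu, indicator_of_notMem this]
  rw [convolution_def]
  simp only [ContinuousLinearMap.mul_apply']
  rw [integral_congr_ae (ae_of_all _ hpt), integral_indicator measurableSet_Icc,
    integral_Icc_eq_integral_Ioc, ← intervalIntegral.integral_of_le (by linarith)]

lemma continuous_convolution_indicator_Icc {f : ℝ → ℂ} (hf : Integrable f) {a b : ℝ}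
    (hab : a ≤ b) :
    Continuous (f ⋆[ContinuousLinearMap.mul ℂ ℂ] (Icc a b).indicator 1) := by
  have h : ∀ y, ∫ u in (y - b)..(y - a), f u =
      (∫ u in 0..(y - a), f u) - ∫ u in 0..(y - b), f u := fun y =>
    (intervalIntegral.integral_interval_sub_left hf.intervalIntegrable hf.intervalIntegrable).symm
  simp_rw [funext (convolution_indicator_Icc f hab), h]
  exact ((hf.continuous_primitive 0).comp (continuous_sub_right a)).sub
    ((hf.continuous_primitive 0).comp (continuous_sub_right b))

lemma integral_sincpi_sub_mul_sincpi (x : ℝ) : ∫ t, sincpi (x - t) * sincpi t = sincpi x := by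
  set w := modulatedWindow x ⋆[ContinuousLinearMap.mul ℂ ℂ] modulatedWindow 0
  have hab : -(2 * π)⁻¹ ≤ (2 * π)⁻¹ := by linarith [inv_pos.2 Real.two_pi_pos]
  have hw_int : Integrable w :=
    (integrable_modulatedWindow x).integrable_convolution _ (integrable_modulatedWindow 0)
  have hw_cont : Continuous w := by
    simp only [w, modulatedWindow_zero]
    exact continuous_convolution_indicator_Icc (integrable_modulatedWindow x) hab
  have hw_zero : w 0 = sincpi x := by
    simp only [w, modulatedWindow_zero, convolution_indicator_Icc _ hab, zero_sub, sub_neg_eq_add,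
      zero_add]
    rw [← integral_exp_window_eq_sincpi]
    refine intervalIntegral.integral_congr fun u hu => ?_
    rw [uIcc_of_le hab] at hu
    simp only [modulatedWindow, indicator_of_mem hu]
  have hFw : 𝓕 w = fun t => ((sincpi (x - t) * sincpi t : ℝ) : ℂ) := by
    ext t
    rw [Real.fourier_mul_convolution_eq (integrable_modulatedWindow x)
      (integrable_modulatedWindow 0), fourier_modulatedWindow, fourier_modulatedWindow, zero_sub,
      sincpi_neg, Complex.ofReal_mul]
  have hinv := hw_int.fourierInv_fourier_eq (hFw ▸ (integrable_sincpi_sub_mul_sincpi x).ofReal)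
    hw_cont.continuousAt (v := 0)
  rw [Real.fourierInv_eq, hFw, hw_zero] at hinv
  simp only [inner_zero_right, AddChar.map_zero_eq_one, one_smul] at hinv
  exact_mod_cast hinv

lemma convIter_eq_sincpi (n : ℕ) : convIter n = sincpi := by
  induction n with
  | zero => rfl
  | succ n ih => ext x; simp only [convIter, ih, integral_sincpi_sub_mul_sincpi]

/-- For every `l ≥ 2`, the iterated integral
`∫⋯∫ φ(-t₂) φ(t₂-t₃) ⋯ φ(t_{l-1}-t_l) φ(t_l) dt₂ ⋯ dt_l = 1/π`;
in particular `∫ (sin t/(π t))² dt = 1/π`. -/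
theorem iterated_sinc_integral :
    (∀ l : ℕ, 2 ≤ l → convIter (l - 1) 0 = 1 / Real.pi) ∧
    (∫ t : ℝ, (Real.sin t / (Real.pi * t))^2) = 1 / Real.pi := by
  have hsincpi_zero : sincpi 0 = 1 / π := if_pos rfl
  refine ⟨fun l _ => by rw [convIter_eq_sincpi, hsincpi_zero], ?_⟩
  have hsq : (fun t => (Real.sin t / (π * t)) ^ 2) =ᵐ[volume]
      fun t => sincpi (0 - t) * sincpi t := by
    filter_upwards [compl_mem_ae_iff.2 (measure_singleton (0 : ℝ))] with t (ht : t ≠ 0)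
    rw [zero_sub, sincpi_neg, sincpi, if_neg ht, sq]
  rw [integral_congr_ae hsq, integral_sincpi_sub_mul_sincpi, hsincpi_zero]
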